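/- Let 𝒜 be a finite alphabet with |𝒜| = a ≥ 3 containing two distinguished symbols 0 and 1, let n be even, and let X_LB ∈ 𝒜^n be the alternating string 0101…01. Let d, i ∈ ℕ with 2d ≤ n. Then the number of distinct strings Y over 𝒜 obtainable from X_LB by first deleting a set of d pairwise non-adjacent positions and then inserting i symbols from 𝒜 \ {0,1} at arbitrary positions is at least C(n−d, d)·C(n−d+i, i)·(a−2)^i. In particular, the post-edit set of X_LB with deletion budget d and insertion budget i has cardinality at least C(n−d, d)·C(n−d+i, i)·(a−2)^i. -/

import Mathlib

/-!
Deleting a set of pairwise non-adjacent positions from a word whose consecutive letters differ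
loses no information: scanning from the left, the next kept position is the current one plus one
or plus two, and its letter tells which. Such deletion sets arise injectively from the `d`-subsets
of `range (n - d)` by shifting the `k`-th smallest element up by `k`. Inserting letters that do not
occur in the word is reversible as well: filtering them out recovers the word, and masking the
other letters recovers where and what was inserted. Counting deletion sets, insertion positions
and inserted letters gives the bound.
-/

/-- The post-edit set of a string `X` with deletion budget `d` and insertion
budget `i`. -/
def PostEditSet {α : Type*} (X : List α) (d i : ℕ) : Set (List α) :=
  {Y | ∃ Z : List α, Z.Sublist X ∧ Z.Sublist Y ∧
    X.length - Z.length ≤ d ∧ Y.length - Z.length ≤ i}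

/-- `deleteIndices X S` is the string obtained from `X` by deleting the symbols
whose positions lie in `S`. -/
def deleteIndices {α : Type*} (X : List α) (S : Finset ℕ) : List α :=
  (X.zipIdx.filter (fun p => p.2 ∉ S)).map Prod.fst

/-- `InsertSeq A i X Y` : `Y` is obtained from `X` by exactly `i` single-symbol
insertions, at arbitrary positions, of symbols drawn from the set `A`. -/
inductive InsertSeq {α : Type*} (A : Set α) : ℕ → List α → List α → Prop
  | refl (X : List α) : InsertSeq A 0 X X
  | step {i : ℕ} {X Y Z : List α} (u v : List α) (c : α) :
      c ∈ A → X = u ++ v → Y = u ++ [c] ++ v → InsertSeq A i Y Z →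
      InsertSeq A (i + 1) X Z

open Finset

namespace InsertSeq

variable {α : Type*} {A : Set α} {i : ℕ} {X Y : List α}

theorem cons (h : InsertSeq A i X Y) (c : α) : InsertSeq A i (c :: X) (c :: Y) := by
  induction h with
  | refl X => exact .refl _
  | step u v b hb hX hY _ ih => exact .step (c :: u) v b hb (by simp [hX]) (by simp [hY]) ih

theorem sublist (h : InsertSeq A i X Y) : X.Sublist Y := by
  induction h with
  | refl X => exact .refl X
  | step u v b _ hX hY _ ih =>
    subst hX hY
    exact .trans (by simp) ih

theorem length_eq (h : InsertSeq A i X Y) : Y.length = X.length + i := by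
  induction h with
  | refl X => rfl
  | step u v b _ hX hY _ ih => subst hX hY; simp [ih]; omega

end InsertSeq

section Insertion

variable {α : Type*} {A : Set α} [DecidablePred (· ∈ A)]

theorem insertSeq_filter_notMem :
    ∀ Y : List α, InsertSeq A (Y.countP (· ∈ A)) (Y.filter (· ∉ A)) Y
  | [] => .refl []
  | c :: Y => by
    by_cases hc : c ∈ A
    · rw [List.filter_cons_of_neg (by simp [hc]), List.countP_cons_of_pos (by simp [hc])]
      exact .step [] _ c hc rfl rfl ((insertSeq_filter_notMem Y).cons c)
    · rw [List.filter_cons_of_pos (by simp [hc]), List.countP_cons_of_neg (by simpa using hc)]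
      exact (insertSeq_filter_notMem Y).cons c

def fill : List α → List (Option α) → List α
  | w, [] => w
  | w, some b :: V => b :: fill w V
  | [], none :: V => fill [] V
  | a :: w, none :: V => a :: fill w V

theorem filter_fill {w : List α} {V : List (Option α)} (hw : ∀ a ∈ w, a ∉ A)
    (hV : ∀ b, some b ∈ V → b ∈ A) : (fill w V).filter (· ∉ A) = w := by
  induction w, V using fill.induct <;> simp_all [fill]

theorem map_fill {w : List α} {V : List (Option α)} (hw : ∀ a ∈ w, a ∉ A)
    (hV : ∀ b, some b ∈ V → b ∈ A) (hlen : V.countP (·.isNone) = w.length) :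
    (fill w V).map (fun c => if c ∈ A then some c else none) = V := by
  induction w, V using fill.induct <;> simp_all [fill, eq_comm (a := 0)]

theorem insertSeq_fill {w : List α} {V : List (Option α)} (hw : ∀ a ∈ w, a ∉ A)
    (hV : ∀ b, some b ∈ V → b ∈ A) (hlen : V.countP (·.isNone) = w.length) :
    InsertSeq A (V.countP (·.isSome)) w (fill w V) := by
  have hcount : V.countP (·.isSome) = (fill w V).countP (· ∈ A) := by
    conv_lhs => rw [← map_fill hw hV hlen, List.countP_map]
    congr 1
    funext c
    by_cases hc : c ∈ A <;> simp [hc]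
  rw [hcount]
  simpa only [filter_fill hw hV] using insertSeq_filter_notMem (A := A) (fill w V)

theorem eq_of_fill_eq {w w' : List α} {V V' : List (Option α)} (hw : ∀ a ∈ w, a ∉ A)
    (hw' : ∀ a ∈ w', a ∉ A) (hV : ∀ b, some b ∈ V → b ∈ A) (hV' : ∀ b, some b ∈ V' → b ∈ A)
    (hlen : V.countP (·.isNone) = w.length) (hlen' : V'.countP (·.isNone) = w'.length)
    (h : fill w V = fill w' V') : w = w' ∧ V = V' :=
  ⟨by rw [← filter_fill hw hV, h, filter_fill hw' hV'],
    by rw [← map_fill hw hV hlen, h, map_fill hw' hV' hlen']⟩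

end Insertion

section Pattern

variable {α : Type*} {A : Set α} {M : ℕ}

def insertionPattern (T : Finset (Fin M)) (v : T → A) : List (Option α) :=
  List.ofFn fun k => if h : k ∈ T then some (v ⟨k, h⟩ : α) else none

theorem mem_of_some_mem_insertionPattern {T : Finset (Fin M)} {v : T → A} {b : α}
    (hb : some b ∈ insertionPattern T v) : b ∈ A := by
  obtain ⟨k, hk⟩ := List.mem_ofFn.mp hb
  split_ifs at hk with h
  · exact Option.some_injective _ hk ▸ (v ⟨k, h⟩).2

theorem countP_isSome_insertionPattern (T : Finset (Fin M)) (v : T → A) :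
    (insertionPattern T v).countP (·.isSome) = #T := by
  rw [insertionPattern, List.ofFn_eq_map, List.countP_map, List.countP_eq_length_filter,
    ← List.toFinset_card_of_nodup ((List.nodup_finRange M).filter _)]
  congr 1
  ext k
  by_cases hk : k ∈ T <;> simp [hk]

theorem countP_isNone_insertionPattern (T : Finset (Fin M)) (v : T → A) :
    (insertionPattern T v).countP (·.isNone) = M - #T := by
  have h := (insertionPattern T v).length_eq_countP_add_countP (·.isSome)
  rw [countP_isSome_insertionPattern] at h
  simp only [insertionPattern, List.length_ofFn, Bool.not_eq_true, Option.isSome_eq_false_iff,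
    Bool.decide_eq_true] at h ⊢
  omega

theorem eq_of_insertionPattern_eq {T T' : Finset (Fin M)} {v : T → A} {v' : T' → A}
    (h : insertionPattern T v = insertionPattern T' v') : T = T' ∧ HEq v v' := by
  have hfun := List.ofFn_inj.mp h
  obtain rfl : T = T' := by
    ext k
    have := congrFun hfun k
    by_cases hk : k ∈ T <;> by_cases hk' : k ∈ T' <;> simp_all
  refine ⟨rfl, heq_of_eq (funext fun ⟨k, hk⟩ => Subtype.ext ?_)⟩
  simpa [hk] using congrFun hfun k

theorem card_sigma_finset_card_eq_fun [Finite A] (i : ℕ) :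
    Nat.card (Σ T : {T : Finset (Fin M) // #T = i}, (T.1 → A)) = M.choose i * Nat.card A ^ i := by
  rw [Nat.card_sigma,
    sum_congr rfl fun T _ => by rw [Nat.card_fun, Nat.card_eq_finsetCard, T.2],
    sum_const, card_univ, Fintype.card_finset_len, Fintype.card_fin, smul_eq_mul]

variable [DecidablePred (· ∈ A)] {w w' : List α} {T T' : Finset (Fin M)} {v : T → A} {v' : T' → A}

theorem insertSeq_fill_insertionPattern (hw : ∀ a ∈ w, a ∉ A) (hM : M = w.length + #T) :
    InsertSeq A #T w (fill w (insertionPattern T v)) := by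
  simpa only [countP_isSome_insertionPattern] using
    insertSeq_fill hw (fun _ => mem_of_some_mem_insertionPattern)
      (by rw [countP_isNone_insertionPattern]; omega)

theorem eq_of_fill_insertionPattern_eq (hw : ∀ a ∈ w, a ∉ A) (hw' : ∀ a ∈ w', a ∉ A)
    (hM : M = w.length + #T) (hM' : M = w'.length + #T')
    (h : fill w (insertionPattern T v) = fill w' (insertionPattern T' v')) :
    w = w' ∧ T = T' ∧ HEq v v' := by
  obtain ⟨hww', hpat⟩ := eq_of_fill_eq hw hw' (fun _ => mem_of_some_mem_insertionPattern)
    (fun _ => mem_of_some_mem_insertionPattern) (by rw [countP_isNone_insertionPattern]; omega)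
    (by rw [countP_isNone_insertionPattern]; omega) h
  exact ⟨hww', eq_of_insertionPattern_eq hpat⟩

end Pattern

section Deletion

variable {α : Type*}

theorem deleteIndices_sublist (X : List α) (S : Finset ℕ) : (deleteIndices X S).Sublist X := by
  simpa [deleteIndices] using (List.filter_sublist (l := X.zipIdx)).map Prod.fst

theorem length_filter_range_notMem {n : ℕ} {S : Finset ℕ} (hS : S ⊆ range n) :
    ((List.range n).filter (· ∉ S)).length = n - #S := by
  have h : ((List.range n).filter (· ∉ S)).length = #(range n \ S) := by
    rw [← filter_notMem_eq_sdiff]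
    rfl
  rw [h, card_sdiff_of_subset hS, card_range]

theorem length_deleteIndices {X : List α} {S : Finset ℕ} (hS : S ⊆ range X.length) :
    (deleteIndices X S).length = X.length - #S := by
  rw [← length_filter_range_notMem hS, deleteIndices, List.length_map, List.range_eq_range',
    ← List.zipIdx_map_snd 0 X, List.filter_map, List.length_map]
  rfl

theorem deleteIndices_map_range (f : ℕ → α) (n : ℕ) (S : Finset ℕ) :
    deleteIndices ((List.range n).map f) S = ((List.range n).filter (· ∉ S)).map f := by
  have h : (List.range n).zipIdx = (List.range n).map fun j => (j, j) := by
    apply List.ext_getElem <;> simp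
  rw [deleteIndices, List.zipIdx_map, h, List.map_map, List.filter_map, List.map_map]
  rfl

variable {f : ℕ → α} {S S' : Finset ℕ}

theorem map_filter_range'_ne (hf : ∀ j, f j ≠ f (j + 1)) (hS' : ∀ j, ¬(j ∈ S' ∧ j + 1 ∈ S'))
    {s : ℕ} (hs : s ∉ S) (hs' : s ∈ S') (n : ℕ) :
    ((List.range' s (n + 1)).filter (· ∉ S)).map f ≠
      ((List.range' s (n + 1)).filter (· ∉ S')).map f := by
  have hs1 : s + 1 ∉ S' := fun h => hS' s ⟨hs', h⟩
  cases n with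
  | zero => simp [hs, hs']
  | succ n => simp [List.range'_succ, hs, hs', hs1, hf s]

theorem mem_iff_of_map_filter_range'_eq (hf : ∀ j, f j ≠ f (j + 1))
    (hS : ∀ j, ¬(j ∈ S ∧ j + 1 ∈ S)) (hS' : ∀ j, ¬(j ∈ S' ∧ j + 1 ∈ S')) :
    ∀ n s, ((List.range' s n).filter (· ∉ S)).map f = ((List.range' s n).filter (· ∉ S')).map f →
      ∀ j, s ≤ j → j < s + n → (j ∈ S ↔ j ∈ S')
  | 0, _, _, _, h₁, h₂ => by omega
  | n + 1, s, h, j, h₁, h₂ => by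
    have hs : s ∈ S ↔ s ∈ S' := by
      by_cases hsS : s ∈ S <;> by_cases hsS' : s ∈ S'
      · exact iff_of_true hsS hsS'
      · exact absurd h.symm (map_filter_range'_ne hf hS hsS' hsS n)
      · exact absurd h (map_filter_range'_ne hf hS' hsS hsS' n)
      · exact iff_of_false hsS hsS'
    rcases h₁.eq_or_lt with rfl | h₁
    · exact hs
    have htail : ((List.range' (s + 1) n).filter (· ∉ S)).map f =
        ((List.range' (s + 1) n).filter (· ∉ S')).map f := by
      by_cases hsS : s ∈ S
      · simpa [List.range'_succ, hsS, hs.mp hsS] using h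
      · simpa [List.range'_succ, hsS, mt hs.mpr hsS] using h
    exact mem_iff_of_map_filter_range'_eq hf hS hS' n (s + 1) htail j h₁ (by omega)

theorem deleteIndices_map_range_injOn (hf : ∀ j, f j ≠ f (j + 1)) (n : ℕ) :
    Set.InjOn (deleteIndices ((List.range n).map f))
      {S | S ⊆ range n ∧ ∀ j, ¬(j ∈ S ∧ j + 1 ∈ S)} := by
  rintro S ⟨hSn, hS⟩ S' ⟨hS'n, hS'⟩ h
  simp only [deleteIndices_map_range] at h
  rw [List.range_eq_range'] at h
  ext j
  by_cases hj : j < n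
  · exact mem_iff_of_map_filter_range'_eq hf hS hS' n 0 h j j.zero_le (by omega)
  · exact iff_of_false (fun h => hj (mem_range.mp (hSn h))) (fun h => hj (mem_range.mp (hS'n h)))

end Deletion

section Spread

def spread (T : Finset ℕ) : Finset ℕ := T.image fun t => t + #{u ∈ T | u < t}

variable {T : Finset ℕ} {t u : ℕ}

theorem card_filter_lt_lt (ht : t ∈ T) (htu : t < u) :
    #{x ∈ T | x < t} < #{x ∈ T | x < u} := by
  refine card_lt_card ((ssubset_iff_of_subset ?_).mpr ⟨t, by simp [ht, htu], by simp⟩)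
  exact monotone_filter_right T fun _ _ hx => hx.trans htu

theorem add_card_filter_lt_lt (ht : t ∈ T) (hu : u ∈ T) :
    t + #{x ∈ T | x < t} < u + #{x ∈ T | x < u} ↔ t < u := by
  refine ⟨fun h => ?_, fun h => by have := card_filter_lt_lt ht h; omega⟩
  by_contra! hut
  rcases hut.eq_or_lt with rfl | hut
  · omega
  · have := card_filter_lt_lt hu hut; omega

theorem not_adjacent_spread (j : ℕ) : ¬(j ∈ spread T ∧ j + 1 ∈ spread T) := by
  simp only [spread, mem_image]
  rintro ⟨⟨t, ht, rfl⟩, ⟨u, hu, hj⟩⟩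
  have htu := (add_card_filter_lt_lt ht hu).mp (by omega)
  have := card_filter_lt_lt ht htu
  omega

theorem injOn_add_card_filter_lt : Set.InjOn (fun t => t + #{u ∈ T | u < t}) T :=
  fun t ht u hu h => by
    by_contra hne
    rcases Nat.lt_or_gt_of_ne hne with h' | h'
    · exact (add_card_filter_lt_lt ht hu).mpr h' |>.ne h
    · exact (add_card_filter_lt_lt hu ht).mpr h' |>.ne h.symm

theorem card_spread (T : Finset ℕ) : #(spread T) = #T :=
  card_image_of_injOn injOn_add_card_filter_lt

theorem spread_subset_range {m : ℕ} (hT : T ⊆ range m) : spread T ⊆ range (m + #T) := by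
  simp only [spread, subset_iff, mem_image, mem_range]
  rintro _ ⟨t, ht, rfl⟩
  have : #{u ∈ T | u < t} < #T := card_lt_card (filter_ssubset.mpr ⟨t, ht, lt_irrefl t⟩)
  have := mem_range.mp (hT ht)
  omega

theorem card_filter_spread_lt (ht : t ∈ T) :
    #{x ∈ spread T | x < t + #{u ∈ T | u < t}} = #{u ∈ T | u < t} := by
  rw [spread, filter_image, card_image_of_injOn (injOn_add_card_filter_lt.mono (filter_subset _ _))]
  exact congrArg card (filter_congr fun u hu => add_card_filter_lt_lt hu ht)

theorem image_sub_card_filter_spread (T : Finset ℕ) :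
    (spread T).image (fun s => s - #{x ∈ spread T | x < s}) = T := by
  nth_rw 2 [spread]
  rw [image_image]
  refine (image_congr fun t ht => ?_).trans image_id
  simp [card_filter_spread_lt (mem_coe.mp ht)]

theorem spread_injective : Function.Injective spread := fun T T' h => by
  rw [← image_sub_card_filter_spread T, ← image_sub_card_filter_spread T', h]

theorem spread_spec {m d : ℕ} (hT : T ∈ powersetCard d (range m)) :
    spread T ⊆ range (m + d) ∧ #(spread T) = d ∧ ∀ j, ¬(j ∈ spread T ∧ j + 1 ∈ spread T) := by
  obtain ⟨hTm, rfl⟩ := mem_powersetCard.mp hT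
  exact ⟨spread_subset_range hTm, card_spread T, not_adjacent_spread⟩

end Spread

section PostEdit

variable {α : Type*}

theorem mem_postEditSet_of_insertSeq {A : Set α} {X Y : List α} {S : Finset ℕ} {i : ℕ}
    (hS : S ⊆ range X.length) (hY : InsertSeq A i (deleteIndices X S) Y) :
    Y ∈ PostEditSet X #S i :=
  ⟨deleteIndices X S, deleteIndices_sublist X S, hY.sublist,
    by rw [length_deleteIndices hS]; omega, by rw [hY.length_eq]; omega⟩

theorem postEditSet_finite [Finite α] (X : List α) (d i : ℕ) : (PostEditSet X d i).Finite :=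
  (List.finite_length_le α (X.length + i)).subset fun Y ⟨Z, hZX, _, _, hYZ⟩ => by
    have := hZX.length_le
    show Y.length ≤ _
    omega

theorem nonadjacentEdits_subset_postEditSet {A : Set α} {X : List α} {n d i : ℕ}
    (hX : X.length = n) :
    {Y : List α | ∃ S : Finset ℕ, S ⊆ range n ∧ #S = d ∧
      (∀ j, ¬(j ∈ S ∧ j + 1 ∈ S)) ∧ InsertSeq A i (deleteIndices X S) Y} ⊆ PostEditSet X d i := by
  rintro Y ⟨S, hS, rfl, -, hY⟩
  exact mem_postEditSet_of_insertSeq (hX ▸ hS) hY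

theorem le_card_nonadjacentDeletion_insertSeq [Finite α] (A : Set α) {f : ℕ → α}
    (hf : ∀ j, f j ≠ f (j + 1)) (hfA : ∀ j, f j ∉ A) {n d : ℕ} (hd : 2 * d ≤ n) (i : ℕ) :
    (n - d).choose d * (n - d + i).choose i * Nat.card A ^ i ≤
      Nat.card {Y : List α | ∃ S : Finset ℕ, S ⊆ range n ∧ #S = d ∧
        (∀ j, ¬(j ∈ S ∧ j + 1 ∈ S)) ∧
        InsertSeq A i (deleteIndices ((List.range n).map f) S) Y} := by
  classical
  set X := (List.range n).map f
  set E := {Y : List α | ∃ S : Finset ℕ, S ⊆ range n ∧ #S = d ∧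
    (∀ j, ¬(j ∈ S ∧ j + 1 ∈ S)) ∧ InsertSeq A i (deleteIndices X S) Y}
  have hspread (T : powersetCard d (range (n - d))) :
      spread T ⊆ range n ∧ #(spread T) = d ∧ ∀ j, ¬(j ∈ spread T ∧ j + 1 ∈ spread T) := by
    have := spread_spec T.2
    rwa [show n - d + d = n by omega] at this
  have hw (T : powersetCard d (range (n - d))) : ∀ a ∈ deleteIndices X (spread T), a ∉ A := by
    intro a ha
    obtain ⟨j, -, rfl⟩ := List.mem_map.mp ((deleteIndices_sublist X _).subset ha)
    exact hfA j
  have hM (T : powersetCard d (range (n - d))) (U : {U : Finset (Fin (n - d + i)) // #U = i}) :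
      n - d + i = (deleteIndices X (spread T)).length + #U.1 := by
    rw [length_deleteIndices (by simpa [X] using (hspread T).1), U.2, (hspread T).2.1]
    simp [X]
  let F (q : powersetCard d (range (n - d)) ×
      Σ U : {U : Finset (Fin (n - d + i)) // #U = i}, (U.1 → A)) : E :=
    ⟨fill (deleteIndices X (spread q.1)) (insertionPattern q.2.1.1 q.2.2),
      spread q.1, (hspread q.1).1, (hspread q.1).2.1, (hspread q.1).2.2,
      by simpa only [q.2.1.2] using insertSeq_fill_insertionPattern (hw q.1) (hM q.1 q.2.1)⟩
  have hF : Function.Injective F := by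
    rintro ⟨T, U, v⟩ ⟨T', U', v'⟩ h
    obtain ⟨hdel, hU, hv⟩ := eq_of_fill_insertionPattern_eq (hw T) (hw T') (hM T U) (hM T' U')
      (congrArg Subtype.val h)
    obtain rfl : T = T' := Subtype.ext <| spread_injective <| deleteIndices_map_range_injOn hf n
      ⟨(hspread T).1, (hspread T).2.2⟩ ⟨(hspread T').1, (hspread T').2.2⟩ hdel
    obtain rfl : U = U' := Subtype.ext hU
    obtain rfl : v = v' := eq_of_heq hv
    rfl
  have : Finite E := (postEditSet_finite X d i).subset
    (nonadjacentEdits_subset_postEditSet (by simp [X])) |>.to_subtype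
  calc (n - d).choose d * (n - d + i).choose i * Nat.card A ^ i
      = Nat.card (powersetCard d (range (n - d)) ×
          Σ U : {U : Finset (Fin (n - d + i)) // #U = i}, (U.1 → A)) := by
        rw [Nat.card_prod, card_sigma_finset_card_eq_fun, Nat.card_eq_finsetCard,
          card_powersetCard, card_range, mul_assoc]
    _ ≤ Nat.card E := Nat.card_le_card_of_injective F hF

end PostEdit

theorem card_postEdit_alternating_ge_general {𝒜 : Type*} [Fintype 𝒜] {a : ℕ}
    (hcard : Fintype.card 𝒜 = a) (z o : 𝒜) (hzo : z ≠ o)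
    (n d i : ℕ) (hd : 2 * d ≤ n)
    (X : List 𝒜) (hXdef : X = (List.range n).map (fun j => if Even j then z else o)) :
    Nat.card {Y : List 𝒜 | ∃ S : Finset ℕ, S ⊆ Finset.range n ∧ S.card = d ∧
        (∀ j, ¬(j ∈ S ∧ j + 1 ∈ S)) ∧
        InsertSeq ({z, o} : Set 𝒜)ᶜ i (deleteIndices X S) Y} ≥
      (n - d).choose d * (n - d + i).choose i * (a - 2) ^ i ∧
    Nat.card (PostEditSet X d i) ≥
      (n - d).choose d * (n - d + i).choose i * (a - 2) ^ i := by
  have hA : Nat.card ({z, o}ᶜ : Set 𝒜) = a - 2 := by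
    rw [Nat.card_coe_set_eq, Set.ncard_compl, Set.ncard_pair hzo, Nat.card_eq_fintype_card, hcard]
  have hf (j : ℕ) : (if Even j then z else o) ≠ (if Even (j + 1) then z else o) := by
    by_cases hj : Even j <;> simp [hj, Nat.even_add_one, hzo, hzo.symm]
  have hedits := hA ▸ le_card_nonadjacentDeletion_insertSeq ({z, o}ᶜ) hf
    (fun j => by split_ifs <;> simp) hd i
  subst hXdef
  exact ⟨hedits, hedits.trans <| Nat.card_mono (postEditSet_finite _ d i)
    (nonadjacentEdits_subset_postEditSet (by simp))⟩

/-- Theorem 2 (combinatorial core): from the alternating string `0101…01` of even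
length `n`, deleting `d` pairwise non-adjacent positions and then inserting `i`
symbols other than `0` and `1` yields at least `C(n−d,d)·C(n−d+i,i)·(a−2)^i`
distinct strings; in particular the post-edit set with budgets `(d, i)` is at
least that large. -/
theorem card_postEdit_alternating_ge {𝒜 : Type*} [Fintype 𝒜] [DecidableEq 𝒜] {a : ℕ}
    (hcard : Fintype.card 𝒜 = a) (ha : 3 ≤ a) (z o : 𝒜) (hzo : z ≠ o)
    (n d i : ℕ) (hn : Even n) (hd : 2 * d ≤ n)
    (X : List 𝒜) (hXdef : X = (List.range n).map (fun j => if Even j then z else o)) :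
    Nat.card {Y : List 𝒜 | ∃ S : Finset ℕ, S ⊆ Finset.range n ∧ S.card = d ∧
        (∀ j, ¬(j ∈ S ∧ j + 1 ∈ S)) ∧
        InsertSeq ({z, o} : Set 𝒜)ᶜ i (deleteIndices X S) Y} ≥
      (n - d).choose d * (n - d + i).choose i * (a - 2) ^ i ∧
    Nat.card (PostEditSet X d i) ≥
      (n - d).choose d * (n - d + i).choose i * (a - 2) ^ i :=
  card_postEdit_alternating_ge_general hcard z o hzo n d i hd X hXdef
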